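/- Let θ ∈ ℝ and z₁, z₂, z₁', z₂' ∈ ℂ. Then ∫_{ℝ²} conj(φ_{z₁}(p)·φ_{z₂}(q)) · φ_{z₁'}(p·cos θ + q·sin θ) · φ_{z₂'}(q·cos θ − p·sin θ) dp dq = exp( (conj(z₁)·z₁' + conj(z₂)·z₂')·cos θ + (conj(z₂)·z₁' − conj(z₁)·z₂')·sin θ − (|z₁|² + |z₂|² + |z₁'|² + |z₂'|²)/2 ). -/

import Mathlib

open Complex MeasureTheory

/-- The coherent state function `φ_z(x) = π^(−1/4) exp(−|z|²/2 − x²/2 − z²/2 + √2·x·z)`. -/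
noncomputable def coh (z : ℂ) (x : ℝ) : ℂ :=
  ((Real.pi ^ (-(1/4 : ℝ)) : ℝ) : ℂ) *
    Complex.exp (-((‖z‖ : ℝ) : ℂ) ^ 2 / 2 - (x : ℂ) ^ 2 / 2 - z ^ 2 / 2
      + (Real.sqrt 2 : ℂ) * (x : ℂ) * z)

/-- The coherent-state matrix element of the classical evolution operator
of the harmonic oscillator (phase-space rotation by angle `θ = ωT`):
`∫ conj(φ_{z₁}(p) φ_{z₂}(q)) φ_{z₁'}(p cos θ + q sin θ) φ_{z₂'}(q cos θ − p sin θ) dp dq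
 = exp((z̄₁ z₁' + z̄₂ z₂') cos θ + (z̄₂ z₁' − z̄₁ z₂') sin θ − (|z₁|²+|z₂|²+|z₁'|²+|z₂'|²)/2)`. -/
theorem coherent_state_matrix_element_oscillator (θ : ℝ) (z₁ z₂ z₁' z₂' : ℂ) :
    ∫ x : ℝ × ℝ,
        (starRingEnd ℂ) (coh z₁ x.1 * coh z₂ x.2) *
          coh z₁' (x.1 * Real.cos θ + x.2 * Real.sin θ) *
          coh z₂' (x.2 * Real.cos θ - x.1 * Real.sin θ) =
      Complex.exp
        (((starRingEnd ℂ) z₁ * z₁' + (starRingEnd ℂ) z₂ * z₂') * (Real.cos θ : ℂ) +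
          ((starRingEnd ℂ) z₂ * z₁' - (starRingEnd ℂ) z₁ * z₂') * (Real.sin θ : ℂ) -
          (((‖z₁‖ : ℝ) : ℂ) ^ 2 + ((‖z₂‖ : ℝ) : ℂ) ^ 2 +
            ((‖z₁'‖ : ℝ) : ℂ) ^ 2 + ((‖z₂'‖ : ℝ) : ℂ) ^ 2) / 2) := by
  have hsq : (Real.sqrt 2 : ℂ) ^ 2 = 2 := by
    rw [← Complex.ofReal_pow, Real.sq_sqrt (by norm_num : (0:ℝ) ≤ 2)]
    norm_num
  have hpyth : (Real.cos θ : ℂ) ^ 2 + (Real.sin θ : ℂ) ^ 2 = 1 := by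
    rw [← Complex.ofReal_pow, ← Complex.ofReal_pow, ← Complex.ofReal_add,
      Real.cos_sq_add_sin_sq]
    norm_num
  set c : ℝ := Real.pi ^ (-(1/4 : ℝ)) with hc
  set A : ℂ := (starRingEnd ℂ) z₁ + z₁' * (Real.cos θ : ℂ) - z₂' * (Real.sin θ : ℂ) with hA
  set B : ℂ := (starRingEnd ℂ) z₂ + z₁' * (Real.sin θ : ℂ) + z₂' * (Real.cos θ : ℂ) with hB
  set d₁ : ℂ := -((‖z₁‖ : ℝ) : ℂ) ^ 2 / 2 - ((starRingEnd ℂ) z₁) ^ 2 / 2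
      - ((‖z₁'‖ : ℝ) : ℂ) ^ 2 / 2 - z₁' ^ 2 / 2 with hd₁
  set d₂ : ℂ := -((‖z₂‖ : ℝ) : ℂ) ^ 2 / 2 - ((starRingEnd ℂ) z₂) ^ 2 / 2
      - ((‖z₂'‖ : ℝ) : ℂ) ^ 2 / 2 - z₂' ^ 2 / 2 with hd₂
  have key : ∀ x : ℝ × ℝ,
      (starRingEnd ℂ) (coh z₁ x.1 * coh z₂ x.2) *
          coh z₁' (x.1 * Real.cos θ + x.2 * Real.sin θ) *
          coh z₂' (x.2 * Real.cos θ - x.1 * Real.sin θ) =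
      ((c : ℂ) ^ 2 * Complex.exp ((-1) * (x.1 : ℂ) ^ 2
          + (Real.sqrt 2 : ℂ) * A * (x.1 : ℂ) + d₁)) *
        ((c : ℂ) ^ 2 * Complex.exp ((-1) * (x.2 : ℂ) ^ 2
          + (Real.sqrt 2 : ℂ) * B * (x.2 : ℂ) + d₂)) := by
    rintro ⟨p, q⟩
    simp only [coh, map_mul, ← Complex.exp_conj, map_add, map_sub, map_neg, map_div₀,
      map_pow, Complex.conj_ofReal, map_ofNat]
    push_cast
    simp only [← Complex.ofReal_cos, ← Complex.ofReal_sin]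
    rw [show ∀ a b e f : ℂ, (c:ℂ) * Complex.exp a * ((c:ℂ) * Complex.exp b) *
        ((c:ℂ) * Complex.exp e) * ((c:ℂ) * Complex.exp f) =
        (c:ℂ)^2 * (c:ℂ)^2 * Complex.exp (a + b + e + f) from by
      intros a b e f
      rw [Complex.exp_add, Complex.exp_add, Complex.exp_add]; ring]
    rw [show ∀ a b : ℂ, (c:ℂ)^2 * Complex.exp a * ((c:ℂ)^2 * Complex.exp b) =
        (c:ℂ)^2 * (c:ℂ)^2 * Complex.exp (a + b) from by
      intros a b; rw [Complex.exp_add]; ring]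
    congr 1
    congr 1
    rw [hA, hB, hd₁, hd₂]
    linear_combination (-((p:ℂ)^2 + (q:ℂ)^2)/2) * hpyth
  rw [integral_congr_ae (Filter.Eventually.of_forall key), Measure.volume_eq_prod,
    integral_prod_mul (fun p : ℝ => (c : ℂ) ^ 2 * Complex.exp ((-1) * (p : ℂ) ^ 2
        + (Real.sqrt 2 : ℂ) * A * (p : ℂ) + d₁))
      (fun q : ℝ => (c : ℂ) ^ 2 * Complex.exp ((-1) * (q : ℂ) ^ 2
        + (Real.sqrt 2 : ℂ) * B * (q : ℂ) + d₂))]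
  have hneg : ((-1 : ℂ)).re < 0 := by norm_num
  rw [integral_const_mul, integral_const_mul,
    integral_cexp_quadratic hneg ((Real.sqrt 2 : ℂ) * A) d₁,
    integral_cexp_quadratic hneg ((Real.sqrt 2 : ℂ) * B) d₂]
  have hπ : ((Real.pi : ℂ)) ^ (1/2 : ℂ) * ((Real.pi : ℂ)) ^ (1/2 : ℂ)
      = (Real.pi : ℂ) := by
    rw [← Complex.cpow_add _ _
      (by exact_mod_cast Real.pi_ne_zero : ((Real.pi : ℂ)) ≠ 0),
      show (1/2 : ℂ) + (1/2 : ℂ) = 1 by norm_num, Complex.cpow_one]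
  have hc4 : ((c : ℂ))^2 * ((c : ℂ))^2 * (Real.pi : ℂ) = 1 := by
    have h1 : c ^ 4 * Real.pi = 1 := by
      rw [hc, ← Real.rpow_natCast (Real.pi ^ (-(1/4:ℝ))) 4,
        ← Real.rpow_mul Real.pi_pos.le,
        show (-(1/4:ℝ)) * ((4:ℕ):ℝ) = -1 by norm_num,
        Real.rpow_neg_one, inv_mul_cancel₀ Real.pi_ne_zero]
    calc ((c : ℂ))^2 * ((c : ℂ))^2 * (Real.pi : ℂ) = ((c^4 * Real.pi : ℝ) : ℂ) := by
          push_cast; ring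
      _ = 1 := by rw [h1]; norm_num
  simp only [neg_neg, div_one]
  rw [show ∀ X Y : ℂ, (c:ℂ)^2 * ((Real.pi:ℂ)^(1/2:ℂ) * Complex.exp X) *
      ((c:ℂ)^2 * ((Real.pi:ℂ)^(1/2:ℂ) * Complex.exp Y)) =
      ((c:ℂ)^2 * (c:ℂ)^2 * ((Real.pi:ℂ)^(1/2:ℂ) * (Real.pi:ℂ)^(1/2:ℂ))) *
        Complex.exp (X + Y) from fun X Y => by rw [Complex.exp_add]; ring,
    hπ, hc4, one_mul]
  congr 1
  rw [hA, hB, hd₁, hd₂, mul_pow, mul_pow, hsq]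
  linear_combination ((z₁'^2 + z₂'^2)/2) * hpyth
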